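/- arXiv:1306.1686 — 6 statements merged into one kernel-verified Lean document; each statement's English description precedes it below -/
import Mathlib

section
/- Let δ ∈ [0,1], let a ∈ H and r₀ > 0 be such that the closed ball B̄(a, r₀) is contained in C, and define Π^δ z = P z − δ·(z − P z). Then for every z ∈ H one has ‖Π^δ z − a‖² + (1 − δ²)·‖z − P z‖² + 2 r₀ (1 + δ)·‖z − P z‖ ≤ ‖z − a‖². -/
open scoped RealInnerProductSpace

/-
Write `w = z - P z`. Since `w` is an outer normal to `C` at `P z` and `C` contains the
ball `B̄(a, r₀)`, testing the variational inequality against the ball point `a + r₀ w / ‖w‖`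
gives `r₀ ‖w‖ ≤ ⟪w, P z - a⟫`. Expanding both squares, `‖z - a‖² - ‖Π^δ z - a‖²` equals
`(1 - δ²) ‖w‖² + 2 (1 + δ) ⟪w, P z - a⟫`, and `1 + δ ≥ 0` finishes the argument.
-/

section

variable {E : Type*} [NormedAddCommGroup E] [InnerProductSpace ℝ E]

theorem mul_norm_le_inner_of_closedBall_subset {s : Set E} {a p w : E} {r : ℝ} (hr : 0 ≤ r)
    (hball : Metric.closedBall a r ⊆ s) (hw : ∀ c ∈ s, ⟪w, c - p⟫ ≤ 0) :
    r * ‖w‖ ≤ ⟪w, p - a⟫ := by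
  rcases eq_or_ne w 0 with rfl | hw0
  · simp
  have hnorm : 0 < ‖w‖ := norm_pos_iff.mpr hw0
  have hc : a + (r / ‖w‖) • w ∈ s := hball <| by
    rw [Metric.mem_closedBall, dist_eq_norm, add_sub_cancel_left, norm_smul, Real.norm_eq_abs,
      abs_of_nonneg (div_nonneg hr hnorm.le), div_mul_cancel₀ r hnorm.ne']
  have hinner : ⟪w, a + (r / ‖w‖) • w - p⟫ = r * ‖w‖ - ⟪w, p - a⟫ := by
    rw [show a + (r / ‖w‖) • w - p = (r / ‖w‖) • w - (p - a) by abel, inner_sub_right,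
      real_inner_smul_right, real_inner_self_eq_norm_sq]
    field_simp
  linarith [hw _ hc]

theorem norm_sub_sq_sub_norm_sub_smul_sub_sq (z p a : E) (δ : ℝ) :
    ‖z - a‖ ^ 2 - ‖p - δ • (z - p) - a‖ ^ 2
      = (1 - δ ^ 2) * ‖z - p‖ ^ 2 + 2 * (1 + δ) * ⟪z - p, p - a⟫ := by
  rw [show z - a = (z - p) + (p - a) by abel,
    show p - δ • (z - p) - a = (p - a) - δ • (z - p) by abel,
    norm_add_sq_real, norm_sub_sq_real (p - a), real_inner_smul_right, norm_smul, mul_pow,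
    Real.norm_eq_abs, sq_abs, real_inner_comm]
  ring

end

theorem stmt_0_general {H : Type*} [NormedAddCommGroup H] [InnerProductSpace ℝ H]
    (C : Set H)
    (P : H → H)
    (hP : ∀ z : H, P z ∈ C ∧ ∀ c ∈ C, ⟪P z - z, P z - c⟫ ≤ 0)
    (δ : ℝ) (hδ : δ ∈ Set.Icc (0 : ℝ) 1)
    (a : H) (r₀ : ℝ) (hr₀ : 0 < r₀) (hball : Metric.closedBall a r₀ ⊆ C)
    (Pd : H → H) (hPd : ∀ z : H, Pd z = P z - δ • (z - P z)) :
    ∀ z : H,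
      ‖Pd z - a‖ ^ 2 + (1 - δ ^ 2) * ‖z - P z‖ ^ 2 + 2 * r₀ * (1 + δ) * ‖z - P z‖
        ≤ ‖z - a‖ ^ 2 := by
  intro z
  have hnormal : ∀ c ∈ C, ⟪z - P z, c - P z⟫ ≤ 0 := fun c hc => by
    rw [← inner_neg_neg, neg_sub, neg_sub]
    exact (hP z).2 c hc
  have hkey := mul_norm_le_inner_of_closedBall_subset hr₀.le hball hnormal
  have hexpand := norm_sub_sq_sub_norm_sub_smul_sub_sq z (P z) a δ
  rw [hPd]
  nlinarith [mul_le_mul_of_nonneg_left hkey (by linarith [hδ.1] : (0 : ℝ) ≤ 1 + δ)]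

theorem stmt_0 {H : Type*} [NormedAddCommGroup H] [InnerProductSpace ℝ H] [CompleteSpace H]
    (C : Set H) (hCne : C.Nonempty) (hCcl : IsClosed C) (hCcv : Convex ℝ C)
    (P : H → H)
    (hP : ∀ z : H, P z ∈ C ∧ ∀ c ∈ C, ⟪P z - z, P z - c⟫ ≤ 0)
    (δ : ℝ) (hδ : δ ∈ Set.Icc (0 : ℝ) 1)
    (a : H) (r₀ : ℝ) (hr₀ : 0 < r₀) (hball : Metric.closedBall a r₀ ⊆ C)
    (Pd : H → H) (hPd : ∀ z : H, Pd z = P z - δ • (z - P z)) :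
    ∀ z : H,
      ‖Pd z - a‖ ^ 2 + (1 - δ ^ 2) * ‖z - P z‖ ^ 2 + 2 * r₀ * (1 + δ) * ‖z - P z‖
        ≤ ‖z - a‖ ^ 2 :=
  stmt_0_general C P hP δ hδ a r₀ hr₀ hball Pd hPd
end

section
/- Let Π be a generalized projection onto C. Then for every x ∈ H and every a ∈ C, ⟪Π x − a, Π x − x⟫ ≤ (1/2)·‖Π x − x‖². -/
open scoped RealInnerProductSpace

theorem real_inner_sub_sub_le_half_norm_sq_of_norm_sub_le {E : Type*} [NormedAddCommGroup E]
    [InnerProductSpace ℝ E] {p a x : E} (h : ‖p - a‖ ≤ ‖x - a‖) :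
    ⟪p - a, p - x⟫ ≤ (1 / 2) * ‖p - x‖ ^ 2 := by
  have hexpand := norm_sub_sq_real (p - a) (p - x)
  rw [sub_sub_sub_cancel_left] at hexpand
  have hsq : ‖p - a‖ ^ 2 ≤ ‖x - a‖ ^ 2 := pow_le_pow_left₀ (norm_nonneg _) h 2
  linarith

theorem stmt_5_general {H : Type*} [NormedAddCommGroup H] [InnerProductSpace ℝ H]
    (C : Set H)
    (Proj : H → H)
    (hProjid : ∀ x ∈ C, Proj x = x)
    (hProjne : ∀ x y : H, ‖Proj x - Proj y‖ ≤ ‖x - y‖) :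
    ∀ x : H, ∀ a ∈ C, ⟪Proj x - a, Proj x - x⟫ ≤ (1 / 2) * ‖Proj x - x‖ ^ 2 := by
  intro x a ha
  apply real_inner_sub_sub_le_half_norm_sq_of_norm_sub_le
  simpa only [hProjid a ha] using hProjne x a

theorem stmt_5 {H : Type*} [NormedAddCommGroup H] [InnerProductSpace ℝ H] [CompleteSpace H]
    (C : Set H) (hCne : C.Nonempty)
    (Proj : H → H)
    (hProjC : ∀ x : H, Proj x ∈ C)
    (hProjid : ∀ x ∈ C, Proj x = x)
    (hProjne : ∀ x y : H, ‖Proj x - Proj y‖ ≤ ‖x - y‖) :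
    ∀ x : H, ∀ a ∈ C, ⟪Proj x - a, Proj x - x⟫ ≤ (1 / 2) * ‖Proj x - x‖ ^ 2 :=
  stmt_5_general C Proj hProjid hProjne
end

section
/- Let Π be a generalized projection onto C, and let a ∈ H and r₀ > 0 be such that the closed ball B̄(a, r₀) is contained in C. Then for every x ∈ H, r₀·‖Π x − x‖ ≤ ⟪a − Π x, Π x − x⟫ + (1/2)·‖Π x − x‖². -/
/-!
Π fixes every point y of the ball, so nonexpansiveness gives ‖Π x − y‖ ≤ ‖x − y‖, i.e.
2⟪Π x − y, Π x − x⟫ ≤ ‖Π x − x‖². Choosing y = a − r₀ (Π x − x)/‖Π x − x‖, the point of the ball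
furthest in the direction opposite to Π x − x, turns this into the claim.
-/

open scoped RealInnerProductSpace

section

variable {E : Type*} [NormedAddCommGroup E] [InnerProductSpace ℝ E]

theorem two_mul_inner_le_norm_sq_of_norm_sub_le {p x y : E} (h : ‖p - y‖ ≤ ‖x - y‖) :
    2 * ⟪p - y, p - x⟫ ≤ ‖p - x‖ ^ 2 := by
  have hxy : x - y = (p - y) - (p - x) := by abel
  have hexpand := norm_sub_sq_real (p - y) (p - x)
  rw [← hxy] at hexpand
  nlinarith [norm_nonneg (p - y)]

theorem exists_mem_closedBall_inner_sub_eq (a v : E) {r : ℝ} (hr : 0 ≤ r) :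
    ∃ y ∈ Metric.closedBall a r, ⟪v, a - y⟫ = r * ‖v‖ := by
  rcases eq_or_ne v 0 with rfl | hv
  · exact ⟨a, Metric.mem_closedBall_self hr, by simp⟩
  have hv' : ‖v‖ ≠ 0 := norm_ne_zero_iff.mpr hv
  refine ⟨a - (r / ‖v‖) • v, ?_, ?_⟩
  · rw [Metric.mem_closedBall, dist_eq_norm, sub_sub_cancel_left, norm_neg, norm_smul,
      Real.norm_eq_abs, abs_div, abs_of_nonneg hr, abs_norm, div_mul_cancel₀ _ hv']
  · rw [sub_sub_cancel, real_inner_smul_right, real_inner_self_eq_norm_sq]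
    field_simp

end

theorem stmt_6_general {H : Type*} [NormedAddCommGroup H] [InnerProductSpace ℝ H]
    (C : Set H)
    (Proj : H → H)
    (hProjid : ∀ x ∈ C, Proj x = x)
    (hProjne : ∀ x y : H, ‖Proj x - Proj y‖ ≤ ‖x - y‖)
    (a : H) (r₀ : ℝ) (hr₀ : 0 < r₀) (hball : Metric.closedBall a r₀ ⊆ C) :
    ∀ x : H, r₀ * ‖Proj x - x‖ ≤ ⟪a - Proj x, Proj x - x⟫ + (1 / 2) * ‖Proj x - x‖ ^ 2 := by
  intro x
  obtain ⟨y, hy, hinner⟩ := exists_mem_closedBall_inner_sub_eq a (Proj x - x) hr₀.le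
  have hclose : ‖Proj x - y‖ ≤ ‖x - y‖ := by
    simpa only [hProjid y (hball hy)] using hProjne x y
  have hkey := two_mul_inner_le_norm_sq_of_norm_sub_le hclose
  have hsplit : ⟪Proj x - y, Proj x - x⟫ = ⟪a - y, Proj x - x⟫ - ⟪a - Proj x, Proj x - x⟫ := by
    rw [← inner_sub_left, sub_sub_sub_cancel_left]
  rw [real_inner_comm] at hinner
  linarith

theorem stmt_6 {H : Type*} [NormedAddCommGroup H] [InnerProductSpace ℝ H] [CompleteSpace H]
    (C : Set H) (hCne : C.Nonempty)
    (Proj : H → H)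
    (hProjC : ∀ x : H, Proj x ∈ C)
    (hProjid : ∀ x ∈ C, Proj x = x)
    (hProjne : ∀ x y : H, ‖Proj x - Proj y‖ ≤ ‖x - y‖)
    (a : H) (r₀ : ℝ) (hr₀ : 0 < r₀) (hball : Metric.closedBall a r₀ ⊆ C) :
    ∀ x : H, r₀ * ‖Proj x - x‖ ≤ ⟪a - Proj x, Proj x - x⟫ + (1 / 2) * ‖Proj x - x‖ ^ 2 :=
  stmt_6_general C Proj hProjid hProjne a r₀ hr₀ hball
end

section
/- Let A : H → Set H be a maximal monotone operator. Then the closure of the domain D(A) = {x ∈ H : A x ≠ ∅} is a convex subset of H. -/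
/-!
By Minty's theorem, for every `t > 0` and every `z` there are `y ∈ A x` with `x + t • y = z`.
Minty's theorem itself comes from Kirszbraun's extension theorem applied to the nonexpansive
Cayley map `x + t • y ↦ x - t • y` on the graph of `A`; the infinite case of Kirszbraun reduces
to the finite one by weak compactness of closed balls.
If `z` is a convex combination of points of `D(A)`, monotonicity gives
`‖z - x‖² ≤ t * (b * ‖z - x‖ + c)` with `b, c` independent of `t`, so `x → z` as `t → 0`.
Hence every segment between points of `D(A)` lies in the closure of `D(A)`, which is therefore
convex.
-/

open scoped RealInnerProductSpace
open Finset Filter Topology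

section HilbertSpace

variable {H E : Type*} [NormedAddCommGroup H] [InnerProductSpace ℝ H]
  [NormedAddCommGroup E] [InnerProductSpace ℝ E]

theorem sum_sum_mul_norm_sub_sq {ι : Type*} [Fintype ι] {l : ι → ℝ} (hl : ∑ i, l i = 1)
    (v : ι → H) :
    ∑ i, ∑ j, l i * l j * ‖v i - v j‖ ^ 2 = 2 * (∑ i, l i * ‖v i‖ ^ 2 - ‖∑ i, l i • v i‖ ^ 2) := by
  have hsq : ‖∑ i, l i • v i‖ ^ 2 = ∑ i, ∑ j, l i * l j * ⟪v i, v j⟫ := by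
    rw [← real_inner_self_eq_norm_sq, sum_inner]
    refine sum_congr rfl fun i _ => ?_
    simp only [inner_sum, real_inner_smul_left, real_inner_smul_right, mul_assoc, mul_left_comm]
  have hleft : ∑ i, ∑ j, l i * l j * ‖v i‖ ^ 2 = ∑ i, l i * ‖v i‖ ^ 2 := by
    simp only [mul_right_comm _ _ (‖_‖ ^ 2), ← mul_sum, hl, mul_one]
  have hright : ∑ i, ∑ j, l i * l j * ‖v j‖ ^ 2 = ∑ j, l j * ‖v j‖ ^ 2 := by
    rw [sum_comm]
    simp only [mul_comm (l _) (l _), mul_assoc, ← mul_sum, ← sum_mul, hl, one_mul]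
  simp only [norm_sub_sq_real, mul_add, mul_sub, sum_add_distrib, sum_sub_distrib, hleft, hright,
    hsq, mul_left_comm _ (2 : ℝ), ← mul_sum]
  ring

theorem sum_mul_norm_sq_sub_norm_sum_sq_le {ι : Type*} [Fintype ι] {l : ι → ℝ}
    (hl : l ∈ stdSimplex ℝ ι) {a : ι → H} {g : ι → E} (hag : ∀ i j, ‖g i - g j‖ ≤ ‖a i - a j‖)
    (z : H) : ∑ i, l i * ‖g i‖ ^ 2 - ‖∑ i, l i • g i‖ ^ 2 ≤ ∑ i, l i * ‖z - a i‖ ^ 2 := by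
  have hvar : ∑ i, ∑ j, l i * l j * ‖g i - g j‖ ^ 2
      ≤ ∑ i, ∑ j, l i * l j * ‖(z - a i) - (z - a j)‖ ^ 2 := by
    gcongr with i _ j _
    · exact mul_nonneg (hl.1 i) (hl.1 j)
    · simpa only [sub_sub_sub_cancel_left, norm_sub_rev (a j)] using hag i j
  rw [sum_sum_mul_norm_sub_sq hl.2, sum_sum_mul_norm_sub_sq hl.2] at hvar
  nlinarith [sq_nonneg ‖∑ i, l i • (z - a i)‖]

theorem nonneg_of_forall_nonneg_add_mul {α β : ℝ} (h : ∀ t, 0 < t → t ≤ 1 → 0 ≤ α + t * β) :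
    0 ≤ α := by
  refine ge_of_tendsto (((by fun_prop : Continuous fun t : ℝ => α + t * β).tendsto' 0 α
    (by simp)).mono_left (nhdsWithin_le_nhds (s := Set.Ioi 0))) ?_
  filter_upwards [Ioo_mem_nhdsGT one_pos] with t ht using h t ht.1 ht.2.le

/- The one-point step of Kirszbraun's theorem. The point `w` is the barycentre `∑ μ i • g i`
for a minimiser `μ` over the simplex of `l ↦ ∑ l i * c i + ‖∑ l i • g i‖ ^ 2`: the first-order
condition at `μ` towards the vertex `i` gives `‖w - g i‖ ^ 2 ≤ ‖z - a i‖ ^ 2 - (value at μ)`, and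
that value is nonnegative by the comparison of weighted variances above. -/
theorem exists_forall_norm_sub_le_of_fintype {ι : Type*} [Fintype ι] (a : ι → H) (g : ι → E)
    (hag : ∀ i j, ‖g i - g j‖ ≤ ‖a i - a j‖) (z : H) : ∃ w, ∀ i, ‖w - g i‖ ≤ ‖z - a i‖ := by
  classical
  rcases isEmpty_or_nonempty ι with hι | ⟨⟨i₀⟩⟩
  · exact ⟨0, isEmptyElim⟩
  set c : ι → ℝ := fun i => ‖z - a i‖ ^ 2 - ‖g i‖ ^ 2
  set L := Fintype.linearCombination ℝ g
  set ℓ := Fintype.linearCombination ℝ c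
  obtain ⟨μ, hμ, hmin⟩ := (isCompact_stdSimplex ℝ ι).exists_isMinOn
    ⟨_, single_mem_stdSimplex ℝ i₀⟩ (by fun_prop : Continuous fun l => ℓ l + ‖L l‖ ^ 2).continuousOn
  set b := L μ
  have hmin_nonneg : 0 ≤ ℓ μ + ‖b‖ ^ 2 := by
    have := sum_mul_norm_sq_sub_norm_sum_sq_le hμ hag z
    simp only [b, ℓ, L, c, Fintype.linearCombination_apply, smul_eq_mul, mul_sub, sum_sub_distrib]
    linarith
  refine ⟨b, fun i => ?_⟩
  have hfirst : 0 ≤ c i - ℓ μ + 2 * ⟪b, g i - b⟫ := by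
    refine nonneg_of_forall_nonneg_add_mul (β := ‖g i - b‖ ^ 2) fun t ht0 ht1 => ?_
    have hle := isMinOn_iff.1 hmin _ (convex_stdSimplex ℝ ι hμ (single_mem_stdSimplex ℝ i)
      (sub_nonneg.2 ht1) ht0.le (sub_add_cancel 1 t))
    have hL : L ((1 - t) • μ + t • Pi.single i 1) = b + t • (g i - b) := by
      simp only [map_add, map_smul, L, b, Fintype.linearCombination_apply_single, one_smul]
      module
    have hℓ : ℓ ((1 - t) • μ + t • Pi.single i 1) = ℓ μ + t * (c i - ℓ μ) := by
      simp only [map_add, map_smul, ℓ, Fintype.linearCombination_apply_single, smul_eq_mul]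
      ring
    rw [hL, hℓ, norm_add_sq_real, norm_smul, real_inner_smul_right, Real.norm_eq_abs, mul_pow,
      sq_abs] at hle
    refine (mul_nonneg_iff_of_pos_left ht0).1 ?_
    linarith
  have hsq : ‖b - g i‖ ^ 2 ≤ ‖z - a i‖ ^ 2 := by
    rw [inner_sub_right, real_inner_self_eq_norm_sq] at hfirst
    rw [norm_sub_sq_real]
    simp only [c] at hfirst
    linarith
  exact (pow_le_pow_iff_left₀ (norm_nonneg _) (norm_nonneg _) two_ne_zero).1 hsq

theorem InnerProductSpace.surjective_inclusionInDoubleDual [CompleteSpace E] :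
    Function.Surjective (NormedSpace.inclusionInDoubleDual ℝ E) := by
  intro φ
  refine ⟨(toDual ℝ E).symm (φ.comp (toDual ℝ E).toContinuousLinearEquiv.toContinuousLinearMap),
    ?_⟩
  ext ℓ
  obtain ⟨u, rfl⟩ := (toDual ℝ E).surjective ℓ
  rw [NormedSpace.dual_def, toDual_apply_apply, real_inner_comm, toDual_symm_apply]
  rfl

theorem Convex.isCompact_toWeakSpace_image [CompleteSpace E] {s : Set E} (hs : Convex ℝ s)
    (hc : IsClosed s) (hb : Bornology.IsBounded s) : IsCompact (toWeakSpace ℝ E '' s) := by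
  rw [← hc.closure_eq, hs.toWeakSpace_closure ℝ]
  refine NormedSpace.isCompact_closure_of_isBounded ℝ E _
    (by rwa [Set.preimage_image_eq _ (toWeakSpace ℝ E).injective]) ?_
  rintro φ -
  obtain ⟨x, hx⟩ := InnerProductSpace.surjective_inclusionInDoubleDual (WeakDual.toStrongDual φ)
  exact ⟨toWeakSpace ℝ E x, DFunLike.ext _ _ (DFunLike.congr_fun hx)⟩

theorem exists_forall_norm_sub_le [CompleteSpace E] {ι : Type*} (a : ι → H) (g : ι → E)
    (hag : ∀ i j, ‖g i - g j‖ ≤ ‖a i - a j‖) (z : H) : ∃ w, ∀ i, ‖w - g i‖ ≤ ‖z - a i‖ := by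
  classical
  rcases isEmpty_or_nonempty ι with hι | ⟨⟨i₀⟩⟩
  · exact ⟨0, isEmptyElim⟩
  set K : ι → Set (WeakSpace ℝ E) := fun i => toWeakSpace ℝ E '' Metric.closedBall (g i) ‖z - a i‖
  have hK : ∀ i, IsCompact (K i) := fun i =>
    (convex_closedBall _ _).isCompact_toWeakSpace_image Metric.isClosed_closedBall
      Metric.isBounded_closedBall
  have hfin : ∀ u : Finset ι, (K i₀ ∩ ⋂ i ∈ u, K i).Nonempty := by
    intro u
    obtain ⟨w, hw⟩ := exists_forall_norm_sub_le_of_fintype (ι := ↥(insert i₀ u))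
      (fun i => a i) (fun i => g i) (fun i j => hag i j) z
    have hwK : ∀ i ∈ insert i₀ u, toWeakSpace ℝ E w ∈ K i := fun i hi =>
      ⟨w, by simpa [dist_eq_norm] using hw ⟨i, hi⟩, rfl⟩
    exact ⟨_, hwK i₀ (mem_insert_self _ _),
      Set.mem_iInter₂.2 fun i hi => hwK i (mem_insert_of_mem hi)⟩
  obtain ⟨w, -, hw⟩ := (hK i₀).inter_iInter_nonempty K (fun i => (hK i).isClosed) hfin
  refine ⟨(toWeakSpace ℝ E).symm w, fun i => ?_⟩
  obtain ⟨v, hv, rfl⟩ := Set.mem_iInter.1 hw i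
  simpa [dist_eq_norm] using hv

theorem norm_sub_le_norm_add_of_inner_nonneg {u v : H} (h : 0 ≤ ⟪u, v⟫) : ‖u - v‖ ≤ ‖u + v‖ := by
  refine (pow_le_pow_iff_left₀ (norm_nonneg _) (norm_nonneg _) two_ne_zero).1 ?_
  rw [norm_sub_sq_real, norm_add_sq_real]
  linarith

theorem real_inner_sub_add_eq (u v : H) : ⟪u - v, u + v⟫ = ‖u‖ ^ 2 - ‖v‖ ^ 2 := by
  rw [inner_sub_left, inner_add_right, inner_add_right, real_inner_self_eq_norm_sq,
    real_inner_self_eq_norm_sq, real_inner_comm u v]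
  ring

end HilbertSpace

theorem le_add_sqrt_of_sq_le {d b c : ℝ} (hb : 0 ≤ b) (hc : 0 ≤ c) (h : d ^ 2 ≤ b * d + c) :
    d ≤ b + √c := by
  by_contra! hlt
  nlinarith [Real.sq_sqrt hc, Real.sqrt_nonneg c]

theorem mem_closure_of_forall_exists_norm_sub_sq_le {F : Type*} [NormedAddCommGroup F]
    {s : Set F} {z : F} {b c : ℝ} (hb : 0 ≤ b) (hc : 0 ≤ c)
    (h : ∀ t > 0, ∃ x ∈ s, ‖z - x‖ ^ 2 ≤ t * (b * ‖z - x‖ + c)) : z ∈ closure s := by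
  rw [Metric.mem_closure_iff]
  intro ε hε
  have hlim : Tendsto (fun t => t * b + √(t * c)) (𝓝[>] 0) (𝓝 0) :=
    ((by fun_prop : Continuous fun t => t * b + √(t * c)).tendsto' 0 0 (by simp)).mono_left
      nhdsWithin_le_nhds
  obtain ⟨t, htε, ht⟩ := ((hlim.eventually (gt_mem_nhds hε)).and self_mem_nhdsWithin).exists
  obtain ⟨x, hx, hxz⟩ := h t ht
  refine ⟨x, hx, ?_⟩
  rw [dist_eq_norm]
  refine (le_add_sqrt_of_sq_le (mul_nonneg ht.le hb) (mul_nonneg ht.le hc) ?_).trans_lt htε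
  linarith

theorem convex_closure_of_segment_subset_closure {F : Type*} [AddCommGroup F] [Module ℝ F]
    [TopologicalSpace F] [IsTopologicalAddGroup F] [ContinuousSMul ℝ F] {s : Set F}
    (h : ∀ x ∈ s, ∀ y ∈ s, segment ℝ x y ⊆ closure s) : Convex ℝ (closure s) := by
  intro x hx y hy a b ha hb hab
  rw [← closure_closure (s := s)]
  exact map_mem_closure₂ (f := fun x y => a • x + b • y) (by fun_prop) hx hy
    fun x hx y hy => h x hx y hy ⟨a, b, ha, hb, hab, rfl⟩

section MonotoneOperator

variable {H : Type*} [NormedAddCommGroup H] [InnerProductSpace ℝ H]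

def IsMonotoneOperator (A : H → Set H) : Prop :=
  ∀ x u y v : H, y ∈ A x → v ∈ A u → 0 ≤ ⟪v - y, u - x⟫

def IsMaximalMonotoneOperator (A : H → Set H) : Prop :=
  IsMonotoneOperator A ∧ ∀ u v : H, (∀ x y : H, y ∈ A x → 0 ≤ ⟪v - y, u - x⟫) → v ∈ A u

theorem IsMonotoneOperator.norm_sub_le_norm_add {A : H → Set H} (hA : IsMonotoneOperator A)
    {x₁ y₁ x₂ y₂ : H} (h₁ : y₁ ∈ A x₁) (h₂ : y₂ ∈ A x₂) {t : ℝ} (ht : 0 ≤ t) :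
    ‖(x₁ - t • y₁) - (x₂ - t • y₂)‖ ≤ ‖(x₁ + t • y₁) - (x₂ + t • y₂)‖ := by
  have h : 0 ≤ ⟪x₁ - x₂, t • (y₁ - y₂)⟫ := by
    rw [real_inner_smul_right, real_inner_comm]
    exact mul_nonneg ht (hA _ _ _ _ h₂ h₁)
  convert norm_sub_le_norm_add_of_inner_nonneg h using 2 <;> module

/- Minty's theorem. Extending the Cayley map `x + t • y ↦ x - t • y` of the graph to `z` gives
`w`, and maximality puts `((z + w) / 2, (z - w) / (2 * t))` in the graph. -/
theorem IsMaximalMonotoneOperator.exists_add_smul_eq [CompleteSpace H] {A : H → Set H}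
    (hA : IsMaximalMonotoneOperator A) {t : ℝ} (ht : 0 < t) (z : H) :
    ∃ x y, y ∈ A x ∧ x + t • y = z := by
  obtain ⟨w, hw⟩ := exists_forall_norm_sub_le (ι := {p : H × H // p.2 ∈ A p.1})
    (fun p => p.1.1 + t • p.1.2) (fun p => p.1.1 - t • p.1.2)
    (fun p q => hA.1.norm_sub_le_norm_add p.2 q.2 ht.le) z
  refine ⟨(1 / 2 : ℝ) • (z + w), (2 * t)⁻¹ • (z - w), hA.2 _ _ fun x y hy => ?_, ?_⟩
  · have hpq := hw ⟨(x, y), hy⟩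
    set p := z - (x + t • y)
    set q := w - (x - t • y)
    have key : ⟪(2 * t)⁻¹ • (z - w) - y, (1 / 2 : ℝ) • (z + w) - x⟫
        = (4 * t)⁻¹ * (‖p‖ ^ 2 - ‖q‖ ^ 2) := by
      have e₁ : (2 * t)⁻¹ • (z - w) - y = (2 * t)⁻¹ • (p - q) := by
        rw [show p - q = (z - w) - (2 * t) • y by module, smul_sub _ (z - w), smul_smul,
          inv_mul_cancel₀ (by positivity), one_smul]
      have e₂ : (1 / 2 : ℝ) • (z + w) - x = (1 / 2 : ℝ) • (p + q) := by module
      rw [e₁, e₂, real_inner_smul_left, real_inner_smul_right, real_inner_sub_add_eq]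
      ring
    rw [key]
    exact mul_nonneg (by positivity) (sub_nonneg.2 (pow_le_pow_left₀ (norm_nonneg _) hpq 2))
  · rw [smul_smul, show t * (2 * t)⁻¹ = 1 / 2 by field_simp]
    module

theorem IsMonotoneOperator.norm_sub_sq_le {A : H → Set H} (hA : IsMonotoneOperator A)
    {x y xₜ yₜ z : H} {t : ℝ} (ht : 0 ≤ t) (hy : y ∈ A x) (hyₜ : yₜ ∈ A xₜ)
    (hz : xₜ + t • yₜ = z) :
    ‖z - xₜ‖ ^ 2 ≤ ⟪z - xₜ, z - x⟫ + t * (‖y‖ * (‖z - xₜ‖ + ‖z - x‖)) := by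
  have hmono : 0 ≤ ⟪(z - xₜ) - t • y, (z - x) - (z - xₜ)⟫ := by
    rw [show z - xₜ = t • yₜ by rw [← hz]; abel, ← smul_sub, real_inner_smul_left,
      show z - x - t • yₜ = xₜ - x by rw [← hz]; abel]
    exact mul_nonneg ht (hA _ _ _ _ hy hyₜ)
  have hcs : -⟪y, (z - x) - (z - xₜ)⟫ ≤ ‖y‖ * (‖z - xₜ‖ + ‖z - x‖) :=
    (neg_le_abs _).trans <| (abs_real_inner_le_norm _ _).trans <|
      mul_le_mul_of_nonneg_left ((norm_sub_le _ _).trans_eq (add_comm _ _)) (norm_nonneg _)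
  rw [inner_sub_left, inner_sub_right (z - xₜ) (z - x), real_inner_self_eq_norm_sq,
    real_inner_smul_left] at hmono
  linarith [mul_le_mul_of_nonneg_left hcs ht]

theorem IsMaximalMonotoneOperator.segment_subset_closure_domain [CompleteSpace H]
    {A : H → Set H} (hA : IsMaximalMonotoneOperator A) {x₀ x₁ : H} (h₀ : (A x₀).Nonempty)
    (h₁ : (A x₁).Nonempty) : segment ℝ x₀ x₁ ⊆ closure {x | (A x).Nonempty} := by
  obtain ⟨y₀, hy₀⟩ := h₀
  obtain ⟨y₁, hy₁⟩ := h₁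
  rintro z ⟨s₀, s₁, hs₀, hs₁, hs, hz⟩
  refine mem_closure_of_forall_exists_norm_sub_sq_le (b := s₀ * ‖y₀‖ + s₁ * ‖y₁‖)
    (c := s₀ * (‖y₀‖ * ‖z - x₀‖) + s₁ * (‖y₁‖ * ‖z - x₁‖)) (by positivity) (by positivity)
    fun t ht => ?_
  obtain ⟨xₜ, yₜ, hyₜ, hxₜ⟩ := hA.exists_add_smul_eq ht z
  refine ⟨xₜ, ⟨yₜ, hyₜ⟩, ?_⟩
  have e₀ := hA.1.norm_sub_sq_le ht.le hy₀ hyₜ hxₜ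
  have e₁ := hA.1.norm_sub_sq_le ht.le hy₁ hyₜ hxₜ
  have hbar : s₀ * ⟪z - xₜ, z - x₀⟫ + s₁ * ⟪z - xₜ, z - x₁⟫ = 0 := by
    rw [← real_inner_smul_right, ← real_inner_smul_right, ← inner_add_right,
      show s₀ • (z - x₀) + s₁ • (z - x₁) = (s₀ + s₁) • z - (s₀ • x₀ + s₁ • x₁) by module,
      hs, one_smul, hz, sub_self, inner_zero_right]
  nlinarith [mul_le_mul_of_nonneg_left e₀ hs₀, mul_le_mul_of_nonneg_left e₁ hs₁]

end MonotoneOperator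

theorem stmt_8 {H : Type*} [NormedAddCommGroup H] [InnerProductSpace ℝ H] [CompleteSpace H]
    (A : H → Set H)
    (hmono : ∀ x u y v : H, y ∈ A x → v ∈ A u → 0 ≤ ⟪v - y, u - x⟫)
    (hmax : ∀ u v : H, (∀ x y : H, y ∈ A x → 0 ≤ ⟪v - y, u - x⟫) → v ∈ A u) :
    Convex ℝ (closure {x : H | (A x).Nonempty}) :=
  convex_closure_of_segment_subset_closure fun _ h₀ _ h₁ =>
    IsMaximalMonotoneOperator.segment_subset_closure_domain ⟨hmono, hmax⟩ h₀ h₁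
end

section
/- Let T > 0 and let k : ℝ → H be right-continuous at every point of [0, T). For N ∈ ℕ set V_N(k) = ∑_{j=0}^{2^N − 1} ‖k((j+1)·T/2^N) − k(j·T/2^N)‖. Then the sequence N ↦ V_N(k) is nondecreasing and sup_N V_N(k) equals the total variation of k on [0, T] (as an equality in [0, ∞], i.e. ⨆_N ENNReal.ofReal (V_N(k)) = eVariationOn k (Set.Icc 0 T)). -/
/-!
Every dyadic sum is the sum of `k` along a partition of `[0, T]`, hence bounded by the
variation, and refining the dyadic grid only increases it by the triangle inequality.
Conversely, given a partition `u₀ ≤ ⋯ ≤ uₙ` of `[0, T]`, round each `uᵢ` up to the dyadic grid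
of mesh `T / 2 ^ N`. The rounded points are grid points in increasing order, so the sum along them
is at most the `N`-th dyadic sum; as `N → ∞` they approach each `uᵢ` from the right, and
right-continuity makes the sums converge to the sum along `u`.
-/

open Set Filter Topology Finset
open scoped ENNReal

noncomputable def dyadicPoint (T : ℝ) (N j : ℕ) : ℝ := j * T / 2 ^ N

noncomputable def dyadicCeil (T : ℝ) (N : ℕ) (x : ℝ) : ℕ := ⌈x * 2 ^ N / T⌉₊

section Dyadic

variable {T : ℝ}

lemma dyadicPoint_mem_Icc (hT : 0 ≤ T) (N : ℕ) {j : ℕ} (hj : j ≤ 2 ^ N) :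
    dyadicPoint T N j ∈ Icc 0 T := by
  have hj' : (j : ℝ) ≤ 2 ^ N := by exact_mod_cast hj
  refine ⟨by unfold dyadicPoint; positivity, ?_⟩
  rw [dyadicPoint, div_le_iff₀ (by positivity)]
  nlinarith

lemma monotone_dyadicPoint (hT : 0 ≤ T) (N : ℕ) : Monotone (dyadicPoint T N) := by
  intro i j hij
  unfold dyadicPoint
  gcongr

lemma dyadicPoint_succ_two_mul (N j : ℕ) :
    dyadicPoint T (N + 1) (2 * j) = dyadicPoint T N j := by
  simp only [dyadicPoint]; push_cast; ring

lemma dyadicCeil_mono (hT : 0 ≤ T) (N : ℕ) : Monotone (dyadicCeil T N) := by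
  intro x y hxy
  unfold dyadicCeil
  gcongr

lemma dyadicCeil_le (hT : 0 < T) (N : ℕ) {x : ℝ} (hx : x ≤ T) :
    dyadicCeil T N x ≤ 2 ^ N := by
  rw [dyadicCeil, Nat.ceil_le, div_le_iff₀ hT]
  push_cast
  rw [mul_comm]
  gcongr

lemma le_dyadicPoint_dyadicCeil (hT : 0 < T) (N : ℕ) (x : ℝ) :
    x ≤ dyadicPoint T N (dyadicCeil T N x) := by
  rw [dyadicPoint, le_div_iff₀ (by positivity), ← div_le_iff₀ hT]
  exact Nat.le_ceil _

lemma dyadicPoint_dyadicCeil_lt (hT : 0 < T) (N : ℕ) {x : ℝ} (hx : 0 ≤ x) :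
    dyadicPoint T N (dyadicCeil T N x) < x + T / 2 ^ N := by
  have hceil : (dyadicCeil T N x : ℝ) < x * 2 ^ N / T + 1 :=
    Nat.ceil_lt_add_one (by positivity)
  calc dyadicPoint T N (dyadicCeil T N x) < (x * 2 ^ N / T + 1) * T / 2 ^ N := by
        unfold dyadicPoint; gcongr
    _ = x + T / 2 ^ N := by field_simp

lemma tendsto_dyadicPoint_dyadicCeil (hT : 0 < T) {x : ℝ} (hx : x ∈ Icc 0 T) :
    Tendsto (fun N => dyadicPoint T N (dyadicCeil T N x)) atTop (𝓝[Icc x T] x) := by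
  have hmesh : Tendsto (fun N : ℕ => x + T / 2 ^ N) atTop (𝓝 x) := by
    simpa using (tendsto_const_nhds (x := x)).add
      (tendsto_const_nhds.div_atTop (tendsto_pow_atTop_atTop_of_one_lt one_lt_two))
  refine tendsto_nhdsWithin_iff.2 ⟨?_, Eventually.of_forall fun N => ?_⟩
  · exact tendsto_of_tendsto_of_tendsto_of_le_of_le tendsto_const_nhds hmesh
      (fun N => le_dyadicPoint_dyadicCeil hT N x)
      (fun N => (dyadicPoint_dyadicCeil_lt hT N hx.1).le)
  · exact ⟨le_dyadicPoint_dyadicCeil hT N x,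
      (dyadicPoint_mem_Icc hT.le N (dyadicCeil_le hT N hx.2)).2⟩

end Dyadic

section Variation

variable {α : Type*} [PseudoEMetricSpace α]

lemma sum_edist_comp_le_sum_Ico (w : ℕ → α) {m : ℕ → ℕ} (hm : Monotone m) (n : ℕ) :
    ∑ i ∈ range n, edist (w (m (i + 1))) (w (m i)) ≤
      ∑ j ∈ Ico (m 0) (m n), edist (w (j + 1)) (w j) := by
  induction n with
  | zero => simp
  | succ n ih =>
    rw [sum_range_succ, ← sum_Ico_consecutive _ (hm n.zero_le) (hm n.le_succ)]
    gcongr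
    rw [edist_comm]
    exact (edist_le_Ico_sum_edist w (hm n.le_succ)).trans_eq
      (sum_congr rfl fun _ _ => edist_comm _ _)

noncomputable def dyadicVariation (f : ℝ → α) (T : ℝ) (N : ℕ) : ℝ≥0∞ :=
  ∑ j ∈ range (2 ^ N), edist (f (dyadicPoint T N (j + 1))) (f (dyadicPoint T N j))

variable {T : ℝ} (f : ℝ → α)

lemma sum_edist_dyadicPoint_comp_le_dyadicVariation {N : ℕ} {m : ℕ → ℕ} (hm : Monotone m)
    {n : ℕ} (hmn : m n ≤ 2 ^ N) :
    ∑ i ∈ range n, edist (f (dyadicPoint T N (m (i + 1)))) (f (dyadicPoint T N (m i))) ≤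
      dyadicVariation f T N :=
  (sum_edist_comp_le_sum_Ico (fun j => f (dyadicPoint T N j)) hm n).trans <|
    sum_le_sum_of_subset fun _ hj => mem_range.2 ((mem_Ico.1 hj).2.trans_le hmn)

lemma monotone_dyadicVariation : Monotone (dyadicVariation f T) := by
  refine monotone_nat_of_le_succ fun N => ?_
  have h := sum_edist_dyadicPoint_comp_le_dyadicVariation f (T := T) (N := N + 1)
    (m := fun j => 2 * j) (fun _ _ h => Nat.mul_le_mul_left 2 h) (n := 2 ^ N) (by rw [pow_succ'])
  simpa only [dyadicPoint_succ_two_mul, dyadicVariation] using h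

lemma dyadicVariation_le_eVariationOn (hT : 0 ≤ T) (N : ℕ) :
    dyadicVariation f T N ≤ eVariationOn f (Icc 0 T) := by
  simpa [dyadicVariation] using
    eVariationOn.sum_le_of_monotoneOn_Icc (f := f) (m := 0) (n := 2 ^ N)
      ((monotone_dyadicPoint hT N).monotoneOn _) fun _ hj => dyadicPoint_mem_Icc hT N hj.2

lemma eVariationOn_Icc_le_iSup_dyadicVariation (hT : 0 < T)
    (hf : ∀ t ∈ Ico 0 T, ContinuousWithinAt f (Ici t) t) :
    eVariationOn f (Icc 0 T) ≤ ⨆ N, dyadicVariation f T N := by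
  have hcont : ∀ x ∈ Icc 0 T, ContinuousWithinAt f (Icc x T) x := by
    rintro x ⟨hx0, hxT⟩
    rcases hxT.lt_or_eq with hxT | rfl
    · exact (hf x ⟨hx0, hxT⟩).mono Icc_subset_Ici_self
    · rw [Set.Icc_self]; exact continuousWithinAt_singleton
  rw [eVariationOn]
  refine iSup_le fun ⟨n, u, hu, us⟩ => ?_
  let s N i := dyadicPoint T N (dyadicCeil T N (u i))
  have hlim : Tendsto (fun N => ∑ i ∈ range n, edist (f (s N (i + 1))) (f (s N i))) atTop
      (𝓝 (∑ i ∈ range n, edist (f (u (i + 1))) (f (u i)))) := by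
    have hfs : ∀ i, Tendsto (fun N => f (s N i)) atTop (𝓝 (f (u i))) := fun i =>
      (hcont _ (us i)).tendsto.comp (tendsto_dyadicPoint_dyadicCeil hT (us i))
    exact tendsto_finsetSum _ fun i _ => (hfs (i + 1)).edist (hfs i)
  refine le_of_tendsto' hlim fun N => le_iSup_of_le N ?_
  exact sum_edist_dyadicPoint_comp_le_dyadicVariation f
    ((dyadicCeil_mono hT.le N).comp hu) (dyadicCeil_le hT N (us n).2)

end Variation

theorem stmt_15_general {H : Type*} [NormedAddCommGroup H]
    (T : ℝ) (hT : 0 < T) (k : ℝ → H)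
    (hk : ∀ t ∈ Set.Ico (0 : ℝ) T, ContinuousWithinAt k (Set.Ici t) t)
    (V : ℕ → ℝ)
    (hV : ∀ N : ℕ, V N =
      ∑ j ∈ Finset.range (2 ^ N),
        ‖k (((j : ℝ) + 1) * T / 2 ^ N) - k ((j : ℝ) * T / 2 ^ N)‖) :
    Monotone V ∧
      (⨆ N : ℕ, ENNReal.ofReal (V N)) = eVariationOn k (Set.Icc 0 T) := by
  have hV_nonneg : ∀ N, 0 ≤ V N := fun N => by rw [hV N]; positivity
  have hV_eq : ∀ N, ENNReal.ofReal (V N) = dyadicVariation k T N := fun N => by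
    rw [hV N, ENNReal.ofReal_sum_of_nonneg fun _ _ => norm_nonneg _, dyadicVariation]
    refine sum_congr rfl fun j _ => ?_
    rw [← dist_eq_norm, ← edist_dist, dyadicPoint, dyadicPoint, Nat.cast_succ]
  refine ⟨fun M N hMN => ?_, ?_⟩
  · rw [← ENNReal.ofReal_le_ofReal_iff (hV_nonneg N), hV_eq, hV_eq]
    exact monotone_dyadicVariation k hMN
  · simp_rw [hV_eq]
    exact le_antisymm (iSup_le (dyadicVariation_le_eVariationOn k hT.le))
      (eVariationOn_Icc_le_iSup_dyadicVariation k hT hk)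

theorem stmt_15 {H : Type*} [NormedAddCommGroup H] [InnerProductSpace ℝ H] [CompleteSpace H]
    (T : ℝ) (hT : 0 < T) (k : ℝ → H)
    (hk : ∀ t ∈ Set.Ico (0 : ℝ) T, ContinuousWithinAt k (Set.Ici t) t)
    (V : ℕ → ℝ)
    (hV : ∀ N : ℕ, V N =
      ∑ j ∈ Finset.range (2 ^ N),
        ‖k (((j : ℝ) + 1) * T / 2 ^ N) - k ((j : ℝ) * T / 2 ^ N)‖) :
    Monotone V ∧
      (⨆ N : ℕ, ENNReal.ofReal (V N)) = eVariationOn k (Set.Icc 0 T) :=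
  stmt_15_general T hT k hk V hV
end

section
/- Suppose C satisfies the r₀-interior uniform ball condition: there is r₀ > 0 such that for every z ∉ C the closed ball B̄(P z − r₀·u_z, r₀) is contained in C, where u_z = (z − P z)/‖z − P z‖. Let δ ∈ [0, 1] and define Π^δ w = P w − δ·(w − P w). Then for every z ∈ H there exists n₀ ∈ ℕ such that the n₀-fold iterate satisfies (Π^δ)^[n₀] z ∈ C. -/
/-! Write `ρ z = ‖z - P z‖` for the distance to `C`. If `z ∉ C` and `u` is the unit outer normal
at `P z`, then `Π^δ z = P z - δ ρ(z) u`, while the interior ball of radius `r₀` at `P z` contains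
`P z - min (δ ρ(z)) (2 r₀) • u`. Hence `Π^δ z` either lies in `C` or is within `δ ρ(z) - 2 r₀` of
`C`, so each step lowers `ρ` by `2 r₀` until it vanishes. -/

open scoped RealInnerProductSpace

section NearestPoint

lemma norm_sub_le_norm_sub_of_inner_nonpos {H : Type*} [NormedAddCommGroup H]
    [InnerProductSpace ℝ H] {z p c : H} (h : ⟪p - z, p - c⟫ ≤ 0) :
    ‖z - p‖ ≤ ‖z - c‖ := by
  have hinner : 0 ≤ ⟪z - p, p - c⟫ := by
    rw [← neg_sub p z, inner_neg_left]
    linarith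
  have hsq : ‖z - c‖ ^ 2 = ‖z - p‖ ^ 2 + 2 * ⟪z - p, p - c⟫ + ‖p - c‖ ^ 2 := by
    rw [← norm_add_sq_real, sub_add_sub_cancel]
  refine (pow_le_pow_iff_left₀ (norm_nonneg _) (norm_nonneg _) two_ne_zero).mp ?_
  nlinarith [sq_nonneg ‖p - c‖]

variable {H : Type*} [NormedAddCommGroup H] {C : Set H} {P : H → H}
  (hnear : ∀ w, ∀ c ∈ C, ‖w - P w‖ ≤ ‖w - c‖)
include hnear

lemma apply_eq_self_of_nearest {z : H} (hz : z ∈ C) : P z = z := by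
  have h := hnear z z hz
  rw [sub_self, norm_zero, norm_le_zero_iff, sub_eq_zero] at h
  exact h.symm

variable [NormedSpace ℝ H]

/-- The point `p - min t (2 r) • u` of the ball lies within `max (t - 2 r) 0` of `p - t • u`. -/
lemma norm_sub_apply_le_of_closedBall_subset {p u : H} (hu : ‖u‖ = 1) {r t : ℝ} (hr : 0 ≤ r)
    (ht : 0 ≤ t) (hball : Metric.closedBall (p - r • u) r ⊆ C) :
    ‖p - t • u - P (p - t • u)‖ ≤ max (t - 2 * r) 0 := by
  have hc : p - min t (2 * r) • u ∈ C := by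
    apply hball
    rw [Metric.mem_closedBall, dist_eq_norm, sub_sub_sub_cancel_left, ← sub_smul, norm_smul, hu,
      mul_one, Real.norm_eq_abs, abs_sub_le_iff]
    constructor <;> cases min_choice t (2 * r) <;> grind
  calc ‖p - t • u - P (p - t • u)‖ ≤ ‖p - t • u - (p - min t (2 * r) • u)‖ := hnear _ _ hc
    _ = max (t - 2 * r) 0 := by
      rw [sub_sub_sub_cancel_left, ← sub_smul, norm_smul, hu, mul_one, Real.norm_eq_abs]
      cases min_choice t (2 * r) <;> grind

end NearestPoint

lemma iterate_le_max_sub_mul {α : Type*} {f : α → α} {ρ : α → ℝ} {a : ℝ} (ha : 0 ≤ a)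
    (hf : ∀ x, ρ (f x) ≤ max (ρ x - a) 0) (n : ℕ) (x : α) :
    ρ (f^[n] x) ≤ max (ρ x - n * a) 0 := by
  induction n with
  | zero => simp
  | succ n ih =>
    rw [Function.iterate_succ_apply']
    refine (hf _).trans (max_le ?_ (le_max_right _ _))
    push_cast
    cases max_choice (ρ x - n * a) 0 <;> grind

theorem stmt_19_general {H : Type*} [NormedAddCommGroup H] [InnerProductSpace ℝ H]
    (C : Set H)
    (P : H → H)
    (hP : ∀ z : H, P z ∈ C ∧ ∀ c ∈ C, ⟪P z - z, P z - c⟫ ≤ 0)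
    (r₀ : ℝ) (hr₀ : 0 < r₀)
    (hball : ∀ z : H, z ∉ C →
      Metric.closedBall (P z - r₀ • (‖z - P z‖⁻¹ • (z - P z))) r₀ ⊆ C)
    (δ : ℝ) (hδ : δ ∈ Set.Icc (0 : ℝ) 1)
    (Pd : H → H) (hPd : ∀ w : H, Pd w = P w - δ • (w - P w)) :
    ∀ z : H, ∃ n₀ : ℕ, Pd^[n₀] z ∈ C := by
  have hnear : ∀ w, ∀ c ∈ C, ‖w - P w‖ ≤ ‖w - c‖ := fun w c hc =>
    norm_sub_le_norm_sub_of_inner_nonpos ((hP w).2 c hc)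
  have hstep : ∀ z, ‖Pd z - P (Pd z)‖ ≤ max (‖z - P z‖ - 2 * r₀) 0 := by
    intro z
    by_cases hz : z ∈ C
    · simp [hPd, apply_eq_self_of_nearest hnear hz]
    have hzP : z - P z ≠ 0 := sub_ne_zero.mpr fun h => hz (h ▸ (hP z).1)
    have hd : 0 < ‖z - P z‖ := norm_pos_iff.mpr hzP
    have hPdz : Pd z = P z - (δ * ‖z - P z‖) • (‖z - P z‖⁻¹ • (z - P z)) := by
      rw [hPd, smul_smul, mul_assoc, mul_inv_cancel₀ hd.ne', mul_one]
    rw [hPdz]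
    refine (norm_sub_apply_le_of_closedBall_subset hnear (norm_smul_inv_norm hzP) hr₀.le
      (mul_nonneg hδ.1 hd.le) (hball z hz)).trans (max_le_max_right 0 ?_)
    nlinarith [hδ.2]
  intro z
  obtain ⟨n, hn⟩ := Archimedean.arch ‖z - P z‖ (by positivity : 0 < 2 * r₀)
  refine ⟨n, ?_⟩
  have hzero := iterate_le_max_sub_mul (ρ := fun w => ‖w - P w‖) (by positivity) hstep n z
  rw [nsmul_eq_mul] at hn
  rw [max_eq_right (by linarith), norm_le_zero_iff, sub_eq_zero] at hzero
  exact hzero ▸ (hP _).1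

theorem stmt_19 {H : Type*} [NormedAddCommGroup H] [InnerProductSpace ℝ H] [CompleteSpace H]
    (C : Set H) (hCne : C.Nonempty) (hCcl : IsClosed C) (hCcv : Convex ℝ C)
    (P : H → H)
    (hP : ∀ z : H, P z ∈ C ∧ ∀ c ∈ C, ⟪P z - z, P z - c⟫ ≤ 0)
    (r₀ : ℝ) (hr₀ : 0 < r₀)
    (hball : ∀ z : H, z ∉ C →
      Metric.closedBall (P z - r₀ • (‖z - P z‖⁻¹ • (z - P z))) r₀ ⊆ C)
    (δ : ℝ) (hδ : δ ∈ Set.Icc (0 : ℝ) 1)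
    (Pd : H → H) (hPd : ∀ w : H, Pd w = P w - δ • (w - P w)) :
    ∀ z : H, ∃ n₀ : ℕ, Pd^[n₀] z ∈ C :=
  stmt_19_general C P hP r₀ hr₀ hball δ hδ Pd hPd
end
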